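/- A torsion-free group containing a free subgroup of finite index is itself free (Swan's theorem, rank-one/cyclic case): if G is torsion-free and has a finite index subgroup isomorphic to ℤ, then G is a free group. -/

import Mathlib

/-!
The normal core of the given copy of `ℤ` is a cyclic normal subgroup `⟨a⟩` of finite index `m`.
For any `g`, write `g ^ m = a ^ n` and `g a g⁻¹ = a ^ k`; conjugating `a ^ n` by `g` gives
`a ^ (k n) = a ^ n`, so `k = 1` unless `n = 0`, in which case `g = 1` by torsion-freeness.
Hence `a` is central, the center has finite index, and the transfer `g ↦ g ^ [G : Z(G)]` embeds
`G` into its center, so `G` is abelian. Then `g ↦ g ^ m` embeds `G` into `⟨a⟩`, so `G` is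
infinite cyclic, i.e. free of rank one.
-/

open Subgroup

section

open scoped IsMulCommutative

variable {G : Type*} [Group G]

theorem eq_one_of_pow_eq_one_of_torsionFree (htf : ∀ g : G, g ≠ 1 → ¬IsOfFinOrder g) {g : G}
    {n : ℕ} (hn : n ≠ 0) (h : g ^ n = 1) : g = 1 := by
  by_contra hg
  exact htf g hg (isOfFinOrder_iff_pow_eq_one.mpr ⟨n, Nat.pos_of_ne_zero hn, h⟩)

theorem mem_center_of_zpowers_normal_of_finiteIndex (htf : ∀ g : G, g ≠ 1 → ¬IsOfFinOrder g)
    (a : G) [(zpowers a).Normal] [(zpowers a).FiniteIndex] : a ∈ center G := by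
  rw [mem_center_iff]
  intro g
  obtain ⟨n, hn⟩ := mem_zpowers_iff.mp (pow_index_mem (zpowers a) g)
  obtain ⟨k, hk⟩ := mem_zpowers_iff.mp (Normal.conj_mem ‹_› a (mem_zpowers a) g)
  by_cases ha : a = 1
  · rw [ha, mul_one, one_mul]
  have hinj : Function.Injective (a ^ · : ℤ → G) :=
    injective_zpow_iff_not_isOfFinOrder.mpr (htf a ha)
  by_cases hn0 : n = 0
  · have : g = 1 := eq_one_of_pow_eq_one_of_torsionFree htf FiniteIndex.index_ne_zero
      (by simpa [hn0] using hn.symm)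
    rw [this, mul_one, one_mul]
  have hkn : a ^ (k * n) = a ^ n := by
    calc a ^ (k * n) = (g * a * g⁻¹) ^ n := by simp only [zpow_mul, hk]
      _ = g * g ^ (zpowers a).index * g⁻¹ := by simp only [conj_zpow, hn]
      _ = a ^ n := by rw [(Commute.self_pow g _).eq, mul_inv_cancel_right, hn]
  have hk1 : k = 1 := (mul_eq_right₀ hn0).mp (hinj hkn)
  rw [← mul_inv_eq_iff_eq_mul, ← hk, hk1, zpow_one]

theorem isMulCommutative_of_finiteIndex_center (htf : ∀ g : G, g ≠ 1 → ¬IsOfFinOrder g)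
    [(center G).FiniteIndex] : IsMulCommutative G := by
  have hinj : Function.Injective (MonoidHom.transferCenterPow G) := by
    rw [injective_iff_map_eq_one]
    intro g hg
    exact eq_one_of_pow_eq_one_of_torsionFree htf FiniteIndex.index_ne_zero
      (by simpa using congrArg Subtype.val hg)
  exact ⟨⟨fun x y => hinj (by rw [map_mul, map_mul, mul_comm])⟩⟩

theorem isCyclic_of_isCyclic_subgroup_of_finiteIndex [IsMulCommutative G]
    (htf : ∀ g : G, g ≠ 1 → ¬IsOfFinOrder g) (N : Subgroup G) [IsCyclic N] [N.FiniteIndex] :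
    IsCyclic G := by
  refine isCyclic_of_injective ((powMonoidHom N.index).codRestrict N N.pow_index_mem) ?_
  rw [injective_iff_map_eq_one]
  intro g hg
  exact eq_one_of_pow_eq_one_of_torsionFree htf (FiniteIndex.index_ne_zero (H := N))
    (congrArg Subtype.val hg)

theorem IsFreeGroup.of_isCyclic_of_infinite [IsCyclic G] [Infinite G] : IsFreeGroup G :=
  .ofMulEquiv (FreeGroup.mulEquivIntOfUnique.trans intCyclicMulEquiv : FreeGroup Unit ≃* G)

end

/-- Swan's theorem (rank-one case): a torsion-free group with a finite index subgroup
isomorphic to `ℤ` is a free group. -/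
theorem torsionFree_virtually_Z_is_free {G : Type*} [Group G]
    (htf : ∀ g : G, g ≠ 1 → ¬IsOfFinOrder g)
    (H : Subgroup G) (hH : H.FiniteIndex) (hZ : Nonempty (H ≃* Multiplicative ℤ)) :
    IsFreeGroup G := by
  obtain ⟨e⟩ := hZ
  have : Infinite G := Infinite.of_injective _ (Subtype.val_injective.comp e.symm.injective)
  have : IsCyclic H := isCyclic_of_surjective e.symm e.symm.surjective
  have : IsCyclic H.normalCore := isCyclic_of_le H.normalCore_le
  obtain ⟨a, ha⟩ := (Subgroup.isCyclic_iff_exists_zpowers_eq_top H.normalCore).mp this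
  have : (zpowers a).Normal := ha ▸ H.normalCore_normal
  have : (zpowers a).FiniteIndex := ha ▸ H.finiteIndex_normalCore
  have : (center G).FiniteIndex :=
    finiteIndex_of_le (zpowers_le.mpr (mem_center_of_zpowers_normal_of_finiteIndex htf a))
  have : IsMulCommutative G := isMulCommutative_of_finiteIndex_center htf
  have : IsCyclic G := isCyclic_of_isCyclic_subgroup_of_finiteIndex htf (zpowers a)
  exact IsFreeGroup.of_isCyclic_of_infinite
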